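/- Let n ≥ 1. A bipartition λ of 2n−2 has the property that its symbol of charge σ₁ = (−2,1) has n-co-core equal to the trivial symbol if and only if λ = 2^i1^{j−i−1}.(n−i−1)(n−j) for some 0 ≤ i < j ≤ n. There are exactly n(n+1)/2 such bipartitions. -/

import Mathlib

open scoped Classical

noncomputable section

/-- A partition: an antitone, eventually zero sequence of natural numbers.
`parts k` is the `(k+1)`-st part `λ_{k+1}`. -/
structure Partition' where
  parts : ℕ → ℕ
  antitone' : Antitone parts
  exists_zero : ∃ N, parts N = 0

namespace Partition'

lemma sorted_getD_antitone {l : List ℕ} (h : l.Pairwise (· ≥ ·)) :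
    Antitone (fun k => l.getD k 0) := by
  intro i j hij
  simp only
  rcases lt_or_ge j l.length with hj | hj
  · have hi : i < l.length := lt_of_le_of_lt hij hj
    rw [List.getD_eq_getElem l 0 hj, List.getD_eq_getElem l 0 hi]
    rcases eq_or_lt_of_le hij with rfl | hlt
    · exact le_rfl
    · exact List.pairwise_iff_getElem.mp h i j hi hj hlt
  · rw [List.getD_eq_default l 0 hj]
    exact Nat.zero_le _

/-- The partition whose multiset of (nonzero) parts is the multiset of nonzero
elements of `m`. -/
def ofMul (m : Multiset ℕ) : Partition' where
  parts := fun k => ((m.sort (· ≤ ·)).reverse).getD k 0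
  antitone' := by
    apply sorted_getD_antitone
    rw [List.pairwise_reverse]
    exact Multiset.pairwise_sort (s := m) (r := fun a b => a ≤ b)
  exists_zero := ⟨((m.sort (· ≤ ·)).reverse).length, List.getD_eq_default _ _ le_rfl⟩

/-- The size `|λ|` of a partition: the sum of its parts. -/
def size (p : Partition') : ℕ := ∑ i ∈ Finset.range (Nat.find p.exists_zero), p.parts i

lemma finite_gt (p : Partition') (k : ℕ) : {i : ℕ | k < p.parts i}.Finite := by
  obtain ⟨N, hN⟩ := p.exists_zero
  apply (Set.finite_Iio N).subset
  intro i hi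
  simp only [Set.mem_setOf_eq] at hi
  by_contra hc
  simp only [Set.mem_Iio, not_lt] at hc
  have := p.antitone' hc
  omega

/-- The conjugate (transpose) partition. -/
def conj (p : Partition') : Partition' where
  parts := fun k => {i : ℕ | k < p.parts i}.ncard
  antitone' := fun a b hab =>
    Set.ncard_le_ncard (fun i hi => lt_of_le_of_lt hab hi) (p.finite_gt a)
  exists_zero := by
    refine ⟨p.parts 0, ?_⟩
    have h : {i : ℕ | p.parts 0 < p.parts i} = ∅ := by
      ext i
      simp only [Set.mem_setOf_eq, Set.mem_empty_iff_false, iff_false, not_lt]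
      exact p.antitone' (Nat.zero_le i)
    show {i : ℕ | p.parts 0 < p.parts i}.ncard = 0
    rw [h, Set.ncard_empty]

/-- The 180°-rotation of the complement of `p` inside the rectangle with
`rows` rows of length `c`: the partition `(c - p_rows, c - p_{rows-1}, …, c - p₁)`. -/
def rotCompl (c rows : ℕ) (p : Partition') : Partition' where
  parts := fun k => if k < rows then c - p.parts (rows - 1 - k) else 0
  antitone' := by
    intro a b hab
    by_cases hb : b < rows
    · have ha : a < rows := lt_of_le_of_lt hab hb
      simp only [if_pos hb, if_pos ha]
      exact Nat.sub_le_sub_left (p.antitone' (by omega)) c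
    · simp only [if_neg hb]
      exact Nat.zero_le _
  exists_zero := ⟨rows, by simp⟩

end Partition'

/-- A bipartition: a pair of partitions. -/
abbrev Bipartition := Partition' × Partition'

/-- The size of a bipartition. -/
def Bipartition.size (l : Bipartition) : ℕ := l.1.size + l.2.size

/-- The bipartition whose components have parts the multisets `a` and `b`. -/
def bip (a b : Multiset ℕ) : Bipartition := (Partition'.ofMul a, Partition'.ofMul b)

/-- The multiset of parts of the partition `a 1^b` (one part `a`, then `b` parts `1`). -/
def hook (a b : ℕ) : Multiset ℕ := a ::ₘ Multiset.replicate b 1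

/-- The charged β-set of a partition, as a sequence:
`betaSet p s i = λ_{i+1} + s - (i+1) + 1`. -/
def betaSet (p : Partition') (s : ℤ) (i : ℕ) : ℤ := (p.parts i : ℤ) + s - i

/-- The charged symbol of a bipartition with charge `σ`, as a pair of subsets of `ℤ`. -/
def symbolOf (l : Bipartition) (σ : ℤ × ℤ) : Set ℤ × Set ℤ :=
  (Set.range (betaSet l.1 σ.1), Set.range (betaSet l.2 σ.2))

/-- The charge `σ_t`. -/
def sigmaT (t : ℕ) : ℤ × ℤ :=
  if Even t then ((t : ℤ), -1 - (t : ℤ)) else (-1 - (t : ℤ), (t : ℤ))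

/-- The trivial symbol `({0,-1,-2,…},{-1,-2,-3,…})`, the symbol of the empty
bipartition with charge `σ₀ = (0,-1)`. -/
def trivialSymbol : Set ℤ × Set ℤ := ({z : ℤ | z ≤ 0}, {z : ℤ | z ≤ -1})

/-- Removing one `n`-co-hook from the symbol `Λ`, yielding `Λ'`: remove `x+n` from one
row, adjoin `x` to the other row, and exchange the two rows. -/
def CohookStep (n : ℕ) (Λ Λ' : Set ℤ × Set ℤ) : Prop :=
  (∃ x : ℤ, x + n ∈ Λ.1 ∧ x ∉ Λ.2 ∧ Λ' = (Λ.2 ∪ {x}, Λ.1 \ {x + n})) ∨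
  (∃ x : ℤ, x + n ∈ Λ.2 ∧ x ∉ Λ.1 ∧ Λ' = (Λ.2 \ {x + n}, Λ.1 ∪ {x}))

/-- `C` is the `n`-co-core of `Λ`: it is obtained from `Λ` by recursively removing
`n`-co-hooks, and no further `n`-co-hook can be removed. -/
def IsCocore (n : ℕ) (Λ C : Set ℤ × Set ℤ) : Prop :=
  Relation.ReflTransGen (CohookStep n) Λ C ∧ ∀ C', ¬ CohookStep n C C'

/-- Number of entries of the charged β-set of `p` that are `≥ α` (with multiplicity). -/
def betaCountGE (p : Partition') (s α : ℤ) : ℕ := Nat.card {i : ℕ // α ≤ betaSet p s i}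

/-- Number of entries `≥ α`, with multiplicity, of the multiset union of the two rows
of the symbol of `l` with charge `σ`. -/
def symCountGE (l : Bipartition) (σ : ℤ × ℤ) (α : ℤ) : ℕ :=
  betaCountGE l.1 σ.1 α + betaCountGE l.2 σ.2 α

/-- The composition `ϖ_Λ` of the symbol of `l` with charge `σ`: `comp l σ k` is the
`(k+1)`-st largest entry (with multiplicity) of the multiset union of the two rows. -/
def comp (l : Bipartition) (σ : ℤ × ℤ) (k : ℕ) : ℤ :=
  sSup {z : ℤ | k + 1 ≤ symCountGE l σ z}

/-- All partial sums of the composition of the symbol `(l,σ)` are bounded by those of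
`(m,τ)`. -/
def DomLE (l : Bipartition) (σ : ℤ × ℤ) (m : Bipartition) (τ : ℤ × ℤ) : Prop :=
  ∀ j : ℕ, ∑ k ∈ Finset.range j, comp l σ k ≤ ∑ k ∈ Finset.range j, comp m τ k

/-- Strict dominance `Λ ⊲ Λ'` of symbols: the compositions differ and all partial sums
of the first are bounded by those of the second. -/
def DomLT (l : Bipartition) (σ : ℤ × ℤ) (m : Bipartition) (τ : ℤ × ℤ) : Prop :=
  comp l σ ≠ comp m τ ∧ DomLE l σ m τ

/-- A box `(x, y, j)` (0-indexed row `x`, 0-indexed column `y`, component `j`: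
`j = 0` is the first component, `j = 1` the second). -/
abbrev Box := ℕ × ℕ × Fin 2

/-- The component of a bipartition selected by `j : Fin 2`. -/
def Bipartition.partsOf (l : Bipartition) (j : Fin 2) : Partition' := if j = 0 then l.1 else l.2

/-- Membership of a box in the Young diagram of a bipartition. -/
def MemY (l : Bipartition) (b : Box) : Prop := b.2.1 < (l.partsOf b.2.2).parts b.1

/-- The entry of the charge `σ` corresponding to component `j`. -/
def chargeOf (σ : ℤ × ℤ) (j : Fin 2) : ℤ := if j = 0 then σ.1 else σ.2

/-- The charged content `co^σ(b) = y - x + σ_j` of a box. -/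
def content (σ : ℤ × ℤ) (b : Box) : ℤ := (b.2.1 : ℤ) - (b.1 : ℤ) + chargeOf σ b.2.2

/-- `j(b) ∈ {1,2}`: the component of a box, numbered 1 or 2. -/
def jval (b : Box) : ℕ := (b.2.2 : ℕ) + 1

/-- The counting function of the Dunkl–Griffeth order. -/
def dgCount (l : Bipartition) (s : ℤ × ℤ) (d : ℕ) (α : ℝ) (j : ℕ) : ℕ :=
  Nat.card {b : Box // MemY l b ∧
    (α < (content s b : ℝ) - (jval b : ℝ) * (d : ℝ) / 2 ∨
      ((content s b : ℝ) - (jval b : ℝ) * (d : ℝ) / 2 = α ∧ jval b ≤ j))}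

/-- The Dunkl–Griffeth order `λ ⪯_s μ` (with respect to `d`). -/
def DGLE (l m : Bipartition) (s : ℤ × ℤ) (d : ℕ) : Prop :=
  ∀ (α : ℝ), ∀ j ∈ ({1, 2} : Set ℕ), dgCount l s d α j ≤ dgCount m s d α j

/-- A box of the extended Young diagram: rows are infinite to the left, so the column
coordinate is an integer.  `(x, y, j)` is the box in (0-indexed) row `x`, with integer
column coordinate `y` (`y = 0` is the first column), in component `j`. -/
abbrev ExtBox := ℕ × ℤ × Fin 2

/-- Membership in the extended Young diagram of a bipartition. -/
def MemExtY (l : Bipartition) (b : ExtBox) : Prop :=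
  b.2.1 < ((l.partsOf b.2.2).parts b.1 : ℤ)

/-- The charged content of an extended box. -/
def contentExt (σ : ℤ × ℤ) (b : ExtBox) : ℤ := b.2.1 - (b.1 : ℤ) + chargeOf σ b.2.2

/-- `b` is a removable box of the bipartition `l`. -/
def Removable (l : Bipartition) (b : Box) : Prop :=
  (l.partsOf b.2.2).parts b.1 = b.2.1 + 1 ∧ (l.partsOf b.2.2).parts (b.1 + 1) ≤ b.2.1

/-- `b` is an addable box of the bipartition `l`. -/
def Addable (l : Bipartition) (b : Box) : Prop :=
  (l.partsOf b.2.2).parts b.1 = b.2.1 ∧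
    (b.1 = 0 ∨ b.2.1 + 1 ≤ (l.partsOf b.2.2).parts (b.1 - 1))

/-- The order in which boxes are listed in the `i`-word: increasing charged content,
a component-2 box preceding a component-1 box of equal charged content. -/
def BoxLT (σ : ℤ × ℤ) (b b' : Box) : Prop :=
  content σ b < content σ b' ∨
    (content σ b = content σ b' ∧ b.2.2 = 1 ∧ b'.2.2 = 0)

/-- `L` is the list of boxes underlying the `i`-word of `(l, σ)` with respect to `d`:
it lists, in increasing order, exactly the addable and removable boxes of `l` whose
charged content is congruent to `i` modulo `d`. -/
def IsIWord (l : Bipartition) (σ : ℤ × ℤ) (d : ℕ) (i : ZMod d) (L : List Box) : Prop :=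
  L.Pairwise (BoxLT σ) ∧
    ∀ b : Box, b ∈ L ↔ ((Addable l b ∨ Removable l b) ∧ ((content σ b : ZMod d) = i))

/-- The sign of a box in the `i`-word: `true` (`+`) for addable, `false` (`−`) for
removable boxes. -/
def signOf (l : Bipartition) (b : Box) : Bool := if Addable l b then true else false

/-- One reduction step on words: delete an adjacent pair `−+`. -/
def RedStep (w w' : List Bool) : Prop :=
  ∃ u v : List Bool, w = u ++ false :: true :: v ∧ w' = u ++ v

/-- `ẽ_i l = 0`: the reduced `i`-word of `(l, σ)` contains no `−`, i.e. the `i`-word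
reduces to a word consisting only of `+`'s. -/
def AnnihilatedE (l : Bipartition) (σ : ℤ × ℤ) (d : ℕ) (i : ZMod d) : Prop :=
  ∃ L : List Box, IsIWord l σ d i L ∧
    ∃ a : ℕ, Relation.ReflTransGen RedStep (L.map (signOf l)) (List.replicate a true)

/-- `q` is obtained from the partition `p` by adding one box. -/
def PCovers (p q : Partition') : Prop :=
  ∃ x : ℕ, q.parts x = p.parts x + 1 ∧ ∀ y : ℕ, y ≠ x → q.parts y = p.parts y

/-- `m` is obtained from the bipartition `l` by adding one box to its Young diagram. -/
def BipCovers (l m : Bipartition) : Prop :=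
  (PCovers l.1 m.1 ∧ m.2 = l.2) ∨ (m.1 = l.1 ∧ PCovers l.2 m.2)

/-- `A(l) = Σ_μ μ`, the sum over all bipartitions obtained from `l` by adding one box,
as an element of the group of `ℤ`-valued functions on bipartitions. -/
def addB (l : Bipartition) : Bipartition → ℤ := fun m => if BipCovers l m then 1 else 0

/-- The projection `π_S` onto the span of the bipartitions lying in `S`. -/
def projS (S : Set Bipartition) (f : Bipartition → ℤ) : Bipartition → ℤ :=
  fun m => if m ∈ S then f m else 0

/-- The basis element of `ℤ[BP]` corresponding to a bipartition. -/
def deltaB (l : Bipartition) : Bipartition → ℤ := fun m => if m = l then 1 else 0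

/-- The bipartitions of `2n` labelling the principal-series unipotent characters in
the principal `Φ_{2n}`-block. -/
def PS (n : ℕ) : Set Bipartition :=
  {l | (∃ i j : ℕ, 0 < i ∧ i < n ∧ j ≤ n ∧
          l = bip (hook (n - i) j) (hook (n - j + 1) (i - 1))) ∨
       (∃ j : ℕ, j < 2 * n ∧ l = bip (hook (2 * n - j) j) 0) ∨
       (∃ i : ℕ, 0 < i ∧ i ≤ 2 * n ∧ l = bip 0 (hook (2 * n - i + 1) (i - 1)))}

/-- The bipartitions of `2n-2` labelling the `B₂`-series unipotent characters in the
principal `Φ_{2n}`-block: `2^i 1^{j-i-1} . (n-i-1)(n-j)` for `0 ≤ i < j ≤ n`. -/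
def LB2 (n : ℕ) : Set Bipartition :=
  {l | ∃ i j : ℕ, i < j ∧ j ≤ n ∧
        l = bip (Multiset.replicate i 2 + Multiset.replicate (j - i - 1) 1)
                {n - i - 1, n - j}}

/-- The bipartitions of `2n-6` labelling the `B₆`-series unipotent characters in the
principal `Φ_{2n}`-block: `(n-i-2)(n-j-1) . 2^{i-1} 1^{j-i-1}` for `0 < i < j < n`. -/
def LB6 (n : ℕ) : Set Bipartition :=
  {l | ∃ i j : ℕ, 0 < i ∧ i < j ∧ j < n ∧
        l = bip {n - i - 2, n - j - 1}
                (Multiset.replicate (i - 1) 2 + Multiset.replicate (j - i - 1) 1)}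

end

/-!
Call the weight of a β-set `X ⊆ ℤ` the sum of its positive elements plus the absolute values
of the non-positive integers missing from it. Replacing an element `y` of `X` by some `x ∉ X`
changes the weight by `x - y`, so removing an `n`-co-hook lowers the total weight of a symbol
by `n`. With charge `(-2, 1)` a bipartition of `2n - 2` has a symbol of weight `2n`, while the
trivial symbol has weight `0`; hence the co-core is trivial exactly when two co-hook removals
reach the trivial symbol. The second row `β₁(λ²)` has two non-negative entries, and running the
two removals backwards from the trivial symbol then forces the symbol to be
`(ℤ≤0 \ {-i, -j}, ℤ≤-1 ∪ {n - i, n - j})` with `0 ≤ i < j ≤ n`, the symbol of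
`2^i 1^(j-i-1) . (n-i-1)(n-j)`.
-/

namespace Partition'

@[ext]
lemma ext {p q : Partition'} (h : p.parts = q.parts) : p = q := by
  cases p; cases q; simpa using h

lemma parts_eq_zero_of_le (p : Partition') {M k : ℕ} (hM : p.parts M = 0) (hk : M ≤ k) :
    p.parts k = 0 :=
  Nat.eq_zero_of_le_zero (hM ▸ p.antitone' hk)

lemma size_eq_sum_range (p : Partition') {M : ℕ} (hM : p.parts M = 0) :
    p.size = ∑ k ∈ Finset.range M, p.parts k :=
  Finset.sum_subset (Finset.range_subset_range.mpr (Nat.find_min' p.exists_zero hM))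
    fun _ _ hk => p.parts_eq_zero_of_le (Nat.find_spec p.exists_zero)
      (not_lt.mp (Finset.mem_range.not.mp hk))

lemma size_ofMul (m : Multiset ℕ) : (ofMul m).size = m.sum := by
  set L := (m.sort (· ≤ ·)).reverse
  calc (ofMul m).size = ∑ k ∈ Finset.range L.length, L.getD k 0 :=
        size_eq_sum_range _ (List.getD_eq_default _ _ le_rfl)
    _ = ∑ k : Fin L.length, L[k.1] := by
        rw [Finset.sum_range]
        exact Finset.sum_congr rfl fun k _ => List.getD_eq_getElem _ _ k.2
    _ = m.sum := by
        rw [Fin.sum_univ_getElem, List.sum_reverse, ← Multiset.sum_coe, Multiset.sort_eq]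

lemma ofMul_parts {L : List ℕ} (hL : L.Pairwise (· ≥ ·)) :
    (ofMul L).parts = fun k => L.getD k 0 := by
  have hsort : Multiset.sort (L : Multiset ℕ) (· ≤ ·) = L.reverse := by
    rw [← Multiset.coe_reverse, Multiset.coe_sort]
    exact List.mergeSort_eq_self _ (List.pairwise_reverse.mpr hL)
  funext k
  simp [ofMul, hsort]

lemma ofMul_parts_two_one (i d : ℕ) :
    (ofMul (Multiset.replicate i 2 + Multiset.replicate d 1)).parts =
      fun k => if k < i then 2 else if k < i + d then 1 else 0 := by
  have hL : (List.replicate i 2 ++ List.replicate d 1).Pairwise (· ≥ ·) := by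
    simp only [List.pairwise_append, List.pairwise_replicate]
    grind
  rw [← Multiset.coe_replicate, ← Multiset.coe_replicate, Multiset.coe_add, ofMul_parts hL]
  funext k
  simp only [List.getD_eq_getElem?_getD, List.getElem?_append, List.length_replicate,
    List.getElem?_replicate]
  grind

lemma ofMul_parts_pair {a b : ℕ} (hba : b ≤ a) :
    (ofMul {a, b}).parts = fun k => if k = 0 then a else if k = 1 then b else 0 := by
  rw [show ({a, b} : Multiset ℕ) = ↑[a, b] from rfl, ofMul_parts (by simpa using hba)]
  funext k
  rcases k with _ | _ | k <;> simp

end Partition'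

lemma betaSet_strictAnti (p : Partition') (s : ℤ) : StrictAnti (betaSet p s) :=
  strictAnti_nat_of_succ_lt fun k => by
    have := p.antitone' (Nat.le_add_right k 1)
    simp only [betaSet]; push_cast; omega

lemma betaSet_eq_of_le (p : Partition') (s : ℤ) {M i : ℕ} (hM : p.parts M = 0) (hi : M ≤ i) :
    betaSet p s i = s - i := by
  simp [betaSet, p.parts_eq_zero_of_le hM hi]

lemma betaSet_left_injective (s : ℤ) : Function.Injective (fun p : Partition' => betaSet p s) :=
  fun _ _ h => Partition'.ext <| funext fun k => by simpa [betaSet] using congrFun h k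

lemma range_betaSet_injective (s : ℤ) :
    Function.Injective (fun p : Partition' => Set.range (betaSet p s)) := by
  intro p q h
  have hmono (p : Partition') : StrictMono (β := ℤᵒᵈ) (betaSet p s) :=
    (betaSet_strictAnti p s).dual_right
  exact betaSet_left_injective s (((hmono p).range_inj (hmono q)).mp h)

lemma symbolOf_injective (σ : ℤ × ℤ) :
    Function.Injective (fun l : Bipartition => symbolOf l σ) :=
  fun _ _ h => Prod.ext (range_betaSet_injective σ.1 (congrArg Prod.fst h))
    (range_betaSet_injective σ.2 (congrArg Prod.snd h))

lemma range_betaSet_two_one {i j : ℕ} (hij : i < j) :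
    Set.range (betaSet (.ofMul (Multiset.replicate i 2 + Multiset.replicate (j - i - 1) 1)) (-2))
      = Set.Iic 0 \ {-(i : ℤ), -(j : ℤ)} := by
  ext z
  simp only [Set.mem_range, betaSet, Partition'.ofMul_parts_two_one, Set.mem_sdiff,
    Set.mem_Iic, Set.mem_insert_iff, Set.mem_singleton_iff]
  constructor
  · rintro ⟨k, rfl⟩
    split_ifs <;> omega
  · rintro ⟨hz, hzij⟩
    refine ⟨if -(i : ℤ) < z then (-z).toNat else if -(j : ℤ) < z then (-z - 1).toNat
      else (-z - 2).toNat, ?_⟩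
    split_ifs <;> omega

lemma range_betaSet_pair {a b : ℕ} (hba : b ≤ a) :
    Set.range (betaSet (.ofMul {a, b}) 1) =
      insert ((a : ℤ) + 1) (insert (b : ℤ) (Set.Iic (-1))) := by
  ext z
  simp only [Set.mem_range, betaSet, Partition'.ofMul_parts_pair hba, Set.mem_Iic,
    Set.mem_insert_iff]
  constructor
  · rintro ⟨k, rfl⟩
    split_ifs <;> omega
  · rintro (rfl | rfl | hz)
    · exact ⟨0, by simp⟩
    · exact ⟨1, by simp⟩
    · exact ⟨(1 - z).toNat, by split_ifs <;> omega⟩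

def IsBetaSet (X : Set ℤ) : Prop := ∃ a b : ℤ, (∀ z ≤ a, z ∈ X) ∧ ∀ z ∈ X, z < b

namespace IsBetaSet

variable {X : Set ℤ}

lemma Iic (s : ℤ) : IsBetaSet (Set.Iic s) :=
  ⟨s, s + 1, fun _ hz => hz, fun _ hz => Int.lt_add_one_of_le hz⟩

lemma insert (h : IsBetaSet X) (x : ℤ) : IsBetaSet (insert x X) := by
  obtain ⟨a, b, ha, hb⟩ := h
  refine ⟨a, max b (x + 1), fun z hz => Or.inr (ha z hz), ?_⟩
  rintro z (rfl | hz)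
  · omega
  · have := hb z hz; omega

lemma diff_singleton (h : IsBetaSet X) (y : ℤ) : IsBetaSet (X \ {y}) := by
  obtain ⟨a, b, ha, hb⟩ := h
  exact ⟨min a (y - 1), b, fun z hz => ⟨ha z (by omega), by simp; omega⟩,
    fun z hz => hb z hz.1⟩

end IsBetaSet

noncomputable def weightTerm (X : Set ℤ) (z : ℤ) : ℤ :=
  if z ∈ X then max z 0 else max (-z) 0

noncomputable def weight (X : Set ℤ) : ℤ := ∑ᶠ z, weightTerm X z

lemma weight_nonneg (X : Set ℤ) : 0 ≤ weight X :=
  finsum_nonneg fun z => by unfold weightTerm; split_ifs <;> omega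

lemma IsBetaSet.finite_support_weightTerm {X : Set ℤ} (h : IsBetaSet X) :
    (Function.support (weightTerm X)).Finite := by
  obtain ⟨a, b, ha, hb⟩ := h
  refine (Set.finite_Icc (min a 0) (max b 0)).subset fun z hz => ?_
  by_contra hz'
  simp only [Set.mem_Icc, not_and_or, not_le] at hz'
  apply hz
  unfold weightTerm
  rcases hz' with hz' | hz'
  · rw [if_pos (ha z (by omega))]; omega
  · rw [if_neg fun hzX => by have := hb z hzX; omega]; omega

lemma weight_insert {X : Set ℤ} (h : IsBetaSet X) {x : ℤ} (hx : x ∉ X) :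
    weight (insert x X) = weight X + x := by
  have hterm : weightTerm (insert x X) = fun z => weightTerm X z + if z = x then x else 0 := by
    funext z
    unfold weightTerm
    by_cases hzx : z = x
    · subst hzx; simp only [Set.mem_insert_iff, true_or, if_true, hx, if_false]; omega
    · simp [hzx]
  have hsingle : (Function.support fun z : ℤ => if z = x then x else 0).Finite :=
    (Set.finite_singleton x).subset fun z hz => by by_contra h; simp_all
  rw [weight, hterm, finsum_add_distrib h.finite_support_weightTerm hsingle,
    finsum_eq_single _ x fun z hz => if_neg hz, if_pos rfl, weight]

lemma weight_diff_singleton {X : Set ℤ} (h : IsBetaSet X) {y : ℤ} (hy : y ∈ X) :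
    weight (X \ {y}) = weight X - y := by
  have := weight_insert (h.diff_singleton y) (x := y) (by simp)
  rw [Set.insert_sdiff_singleton, Set.insert_eq_of_mem hy] at this
  omega

lemma insert_Iic_sub_one (s : ℤ) : insert s (Set.Iic (s - 1)) = Set.Iic s := by
  ext z; simp only [Set.mem_insert_iff, Set.mem_Iic]; omega

lemma two_mul_weight_Iic (s : ℤ) : 2 * weight (Set.Iic s) = s * (s + 1) := by
  have hstep (s : ℤ) : weight (Set.Iic s) = weight (Set.Iic (s - 1)) + s := by
    rw [← insert_Iic_sub_one, weight_insert (.Iic _) (by simp)]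
  induction s using Int.induction_on with
  | zero =>
    have : weightTerm (Set.Iic 0) = 0 := by
      funext z
      simp only [weightTerm, Set.mem_Iic]
      split_ifs <;> simp <;> omega
    simp [weight, this]
  | succ s ih => rw [hstep, add_sub_cancel_right]; linarith
  | pred s ih => have := hstep (-s); linarith

lemma range_update_eq {f : ℕ → ℤ} (hf : Function.Injective f) (k : ℕ) (a : ℤ) :
    Set.range (Function.update f k a) = insert a (Set.range f \ {f k}) := by
  ext z
  simp only [Set.mem_range, Set.mem_insert_iff, Set.mem_sdiff, Set.mem_singleton_iff]
  constructor
  · rintro ⟨i, rfl⟩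
    by_cases hi : i = k
    · subst hi; simp
    · rw [Function.update_of_ne hi]
      exact Or.inr ⟨⟨i, rfl⟩, fun h => hi (hf h)⟩
  · rintro (rfl | ⟨⟨i, rfl⟩, hi⟩)
    · exact ⟨k, Function.update_self _ _ _⟩
    · exact ⟨i, Function.update_of_ne (fun h => hi (congrArg f h)) _ _⟩

lemma weight_range_update {f : ℕ → ℤ} {k : ℕ} {a : ℤ} (hf : Function.Injective f)
    (hf' : Function.Injective (Function.update f k a)) (h : IsBetaSet (Set.range f)) :
    weight (Set.range (Function.update f k a)) = weight (Set.range f) - f k + a := by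
  have ha : a ∉ Set.range f \ {f k} := by
    rintro ⟨⟨i, rfl⟩, hi⟩
    have hik : i ≠ k := fun h => hi (congrArg f h)
    exact hik (hf' ((Function.update_of_ne hik _ f).trans (Function.update_self k _ f).symm))
  rw [range_update_eq hf, weight_insert (h.diff_singleton _) ha,
    weight_diff_singleton h ⟨k, rfl⟩]

section EventuallyShift

variable {f : ℕ → ℤ} {s : ℤ} {N : ℕ}

lemma isBetaSet_range (hf : StrictAnti f) (hN : ∀ i ≥ N, f i = s - i) :
    IsBetaSet (Set.range f) := by
  refine ⟨s - N, f 0 + 1, fun z hz => ⟨(s - z).toNat, ?_⟩, ?_⟩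
  · rw [hN _ (by omega)]; omega
  · rintro z ⟨i, rfl⟩
    have := hf.antitone (Nat.zero_le i); omega

lemma range_eq_Iic (hN : ∀ i, f i = s - i) : Set.range f = Set.Iic s := by
  ext z
  simp only [Set.mem_range, Set.mem_Iic, hN]
  exact ⟨by rintro ⟨i, rfl⟩; omega, fun hz => ⟨(s - z).toNat, by omega⟩⟩

lemma strictAnti_update (hf : StrictAnti f) (hN : ∀ i ≥ N + 1, f i = s - i) :
    StrictAnti (Function.update f N (s - N)) := by
  refine strictAnti_nat_of_succ_lt fun k => ?_
  have hk := hf (Nat.lt_add_one k)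
  have hfN := hf (Nat.lt_add_one N)
  have hN1 := hN (N + 1) le_rfl
  simp only [Function.update_apply]
  split_ifs <;> subst_vars <;> push_cast at * <;> omega

lemma weight_range (hf : StrictAnti f) (hN : ∀ i ≥ N, f i = s - i) :
    weight (Set.range f) = ∑ i ∈ Finset.range N, (f i - (s - i)) + weight (Set.Iic s) := by
  induction N generalizing f with
  | zero => simp [range_eq_Iic fun i => hN i (Nat.zero_le i)]
  | succ N ih =>
    set g := Function.update f N (s - N) with hgdef
    have hg : StrictAnti g := strictAnti_update hf hN
    have hgN : ∀ i ≥ N, g i = s - i := by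
      intro i hi
      rcases hi.eq_or_lt with rfl | hi
      · exact Function.update_self _ _ _
      · rw [hgdef, Function.update_of_ne hi.ne', hN i hi]
    have hfg : f = Function.update g N (f N) := by simp [g]
    have hsum :
        ∑ i ∈ Finset.range N, (g i - (s - i)) = ∑ i ∈ Finset.range N, (f i - (s - i)) :=
      Finset.sum_congr rfl fun i hi =>
        by rw [hgdef, Function.update_of_ne (Finset.mem_range.mp hi).ne]
    rw [hfg, weight_range_update hg.injective (hfg ▸ hf.injective) (isBetaSet_range hg hgN),
      ih hg hgN, hsum, Finset.sum_range_succ, Function.update_self, ← hfg, hgN N le_rfl]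
    ring

end EventuallyShift

lemma isBetaSet_range_betaSet (p : Partition') (s : ℤ) : IsBetaSet (Set.range (betaSet p s)) :=
  isBetaSet_range (betaSet_strictAnti p s) fun _ =>
    betaSet_eq_of_le p s (Nat.find_spec p.exists_zero)

lemma weight_range_betaSet (p : Partition') (s : ℤ) :
    weight (Set.range (betaSet p s)) = p.size + weight (Set.Iic s) := by
  rw [weight_range (betaSet_strictAnti p s) fun _ =>
    betaSet_eq_of_le p s (Nat.find_spec p.exists_zero), Partition'.size]
  push_cast
  simp [betaSet]

def IsBetaSymbol (Λ : Set ℤ × Set ℤ) : Prop := IsBetaSet Λ.1 ∧ IsBetaSet Λ.2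

noncomputable def symbolWeight (Λ : Set ℤ × Set ℤ) : ℤ := weight Λ.1 + weight Λ.2

lemma symbolWeight_nonneg (Λ : Set ℤ × Set ℤ) : 0 ≤ symbolWeight Λ :=
  add_nonneg (weight_nonneg _) (weight_nonneg _)

namespace CohookStep

variable {n : ℕ} {Λ Λ' : Set ℤ × Set ℤ}

lemma isBetaSymbol (h : CohookStep n Λ Λ') (hΛ : IsBetaSymbol Λ) : IsBetaSymbol Λ' := by
  rcases h with ⟨x, -, -, rfl⟩ | ⟨x, -, -, rfl⟩ <;> simp only [Set.union_singleton]
  · exact ⟨hΛ.2.insert x, hΛ.1.diff_singleton _⟩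
  · exact ⟨hΛ.2.diff_singleton _, hΛ.1.insert x⟩

lemma symbolWeight_add (h : CohookStep n Λ Λ') (hΛ : IsBetaSymbol Λ) :
    symbolWeight Λ' + n = symbolWeight Λ := by
  rcases h with ⟨x, hx, hx', rfl⟩ | ⟨x, hx, hx', rfl⟩ <;>
    simp only [symbolWeight, Set.union_singleton]
  · rw [weight_insert hΛ.2 hx', weight_diff_singleton hΛ.1 hx]; ring
  · rw [weight_insert hΛ.1 hx', weight_diff_singleton hΛ.2 hx]; ring

end CohookStep

lemma exists_cohookStep_cohookStep {n : ℕ} (hn : 1 ≤ n) {Λ C : Set ℤ × Set ℤ}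
    (hΛ : IsBetaSymbol Λ) (hw : symbolWeight Λ = 2 * n) (hC : symbolWeight C = 0)
    (h : Relation.ReflTransGen (CohookStep n) Λ C) :
    ∃ Λ₁, CohookStep n Λ Λ₁ ∧ CohookStep n Λ₁ C := by
  rcases h.cases_head with rfl | ⟨Λ₁, h₁, h⟩
  · omega
  have hw₁ := h₁.symbolWeight_add hΛ
  rcases h.cases_head with rfl | ⟨Λ₂, h₂, h⟩
  · omega
  have hw₂ := h₂.symbolWeight_add (h₁.isBetaSymbol hΛ)
  rcases h.cases_head with rfl | ⟨Λ₃, h₃, -⟩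
  · exact ⟨Λ₁, h₁, h₂⟩
  · have := h₃.symbolWeight_add (h₂.isBetaSymbol (h₁.isBetaSymbol hΛ))
    have := symbolWeight_nonneg Λ₃
    omega

lemma trivialSymbol_eq : trivialSymbol = (Set.Iic 0, Set.Iic (-1)) := rfl

lemma symbolWeight_trivialSymbol : symbolWeight trivialSymbol = 0 := by
  have h₀ := two_mul_weight_Iic 0
  have h₁ := two_mul_weight_Iic (-1)
  simp only [symbolWeight, trivialSymbol_eq]
  omega

lemma isCocore_trivialSymbol_iff {n : ℕ} {Λ : Set ℤ × Set ℤ} :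
    IsCocore n Λ trivialSymbol ↔
      1 ≤ n ∧ Relation.ReflTransGen (CohookStep n) Λ trivialSymbol := by
  constructor
  · rintro ⟨h, hC⟩
    refine ⟨Nat.one_le_iff_ne_zero.mpr fun hn => hC _ (Or.inl ⟨0, ?_, ?_, rfl⟩), h⟩ <;>
      simp [hn, trivialSymbol_eq]
  · rintro ⟨hn, h⟩
    refine ⟨h, ?_⟩
    rintro C' (⟨x, hx, hx', -⟩ | ⟨x, hx, hx', -⟩) <;>
      simp only [trivialSymbol_eq, Set.mem_Iic] at hx hx' <;> omega

lemma cohookStep_trivialSymbol_iff {n : ℕ} {Λ : Set ℤ × Set ℤ} :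
    CohookStep n Λ trivialSymbol ↔ ∃ x : ℤ,
      (x ≤ 0 ∧ 0 ≤ x + n ∧ Λ = (insert (x + n) (Set.Iic (-1)), Set.Iic 0 \ {x})) ∨
      (x ≤ -1 ∧ 1 ≤ x + n ∧ Λ = (Set.Iic (-1) \ {x}, insert (x + n) (Set.Iic 0))) := by
  obtain ⟨X, Y⟩ := Λ
  simp only [CohookStep, trivialSymbol_eq, Prod.mk.injEq, Set.ext_iff, Set.mem_union,
    Set.mem_sdiff, Set.mem_insert_iff, Set.mem_singleton_iff, Set.mem_Iic]
  constructor
  · rintro (⟨x, h⟩ | ⟨x, h⟩) <;> exact ⟨x, by grind⟩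
  · rintro ⟨x, h | h⟩
    · exact .inl ⟨x, by grind⟩
    · exact .inr ⟨x, by grind⟩

/-- The two entries `b < a` of `Λ.2` exclude every pair of co-hook removals leading to the
trivial symbol except a removal from the second row followed by one from the first. -/
lemma eq_of_cohookStep_cohookStep_trivialSymbol {n : ℕ} {Λ Λ₁ : Set ℤ × Set ℤ}
    {a b : ℤ} (ha : a ∈ Λ.2) (hb : b ∈ Λ.2) (hb0 : 0 ≤ b) (hab : b < a)
    (h₁ : CohookStep n Λ Λ₁) (h₂ : CohookStep n Λ₁ trivialSymbol) :
    ∃ x y : ℤ, x ≠ y ∧ x ≤ 0 ∧ -n ≤ x ∧ y ≤ 0 ∧ -n ≤ y ∧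
      Λ = (Set.Iic 0 \ {x, y}, insert (x + n) (insert (y + n) (Set.Iic (-1)))) := by
  obtain ⟨X, Y⟩ := Λ
  obtain ⟨x, ⟨hx, hxn, rfl⟩ | ⟨hx, hxn, rfl⟩⟩ :=
      cohookStep_trivialSymbol_iff.mp h₂ <;>
    rcases h₁ with ⟨y, hy, hy', h⟩ | ⟨y, hy, hy', h⟩ <;>
    simp only [Prod.mk.injEq, Set.ext_iff, Set.mem_union, Set.mem_sdiff, Set.mem_insert_iff,
      Set.mem_singleton_iff, Set.mem_Iic] at h ⊢
  · grind
  · exact ⟨x, y, by grind⟩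
  · grind
  · grind

def lb2Bip (n i j : ℕ) : Bipartition :=
  bip (Multiset.replicate i 2 + Multiset.replicate (j - i - 1) 1) {n - i - 1, n - j}

lemma sigmaT_one : sigmaT 1 = (-2, 1) := by
  norm_num [sigmaT]

lemma symbolOf_lb2Bip {n i j : ℕ} (hij : i < j) (hjn : j ≤ n) :
    symbolOf (lb2Bip n i j) (sigmaT 1) = (Set.Iic 0 \ {-(i : ℤ), -(j : ℤ)},
      insert ((n : ℤ) - i) (insert ((n : ℤ) - j) (Set.Iic (-1)))) := by
  rw [sigmaT_one, symbolOf, lb2Bip, bip, range_betaSet_two_one hij,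
    range_betaSet_pair (by omega : n - j ≤ n - i - 1)]
  have ha : ((n - i - 1 : ℕ) : ℤ) + 1 = n - i := by omega
  have hb : ((n - j : ℕ) : ℤ) = n - j := by omega
  rw [ha, hb]

lemma size_lb2Bip {n i j : ℕ} (hij : i < j) (hjn : j ≤ n) :
    Bipartition.size (lb2Bip n i j) = 2 * n - 2 := by
  simp only [Bipartition.size, lb2Bip, bip, Partition'.size_ofMul, Multiset.sum_add,
    Multiset.sum_replicate, Multiset.insert_eq_cons, Multiset.sum_cons, Multiset.sum_singleton,
    smul_eq_mul]
  omega

lemma isCocore_symbolOf_lb2Bip {n i j : ℕ} (hij : i < j) (hjn : j ≤ n) :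
    IsCocore n (symbolOf (lb2Bip n i j) (sigmaT 1)) trivialSymbol := by
  refine isCocore_trivialSymbol_iff.mpr ⟨by omega, .head ?_ (.single
    (a := (insert ((n : ℤ) - j) (Set.Iic (-1)), Set.Iic 0 \ {-(j : ℤ)})) ?_)⟩
  · rw [symbolOf_lb2Bip hij hjn]
    refine .inr ⟨-i, by simp; omega, by simp, ?_⟩
    ext z <;> simp <;> omega
  · exact cohookStep_trivialSymbol_iff.mpr
      ⟨-j, .inl ⟨by omega, by omega, by rw [neg_add_eq_sub]⟩⟩

lemma mem_LB2_of_symbolOf_eq {n : ℕ} {l : Bipartition} {x y : ℤ} (hyx : y < x) (hx : x ≤ 0)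
    (hy : -n ≤ y) (h : symbolOf l (sigmaT 1) =
      (Set.Iic 0 \ {x, y}, insert (x + n) (insert (y + n) (Set.Iic (-1))))) :
    l ∈ LB2 n := by
  refine ⟨(-x).toNat, (-y).toNat, by omega, by omega, ?_⟩
  show l = lb2Bip n _ _
  refine symbolOf_injective (sigmaT 1) ?_
  simp only
  rw [h, symbolOf_lb2Bip (by omega) (by omega), Int.toNat_of_nonneg (by omega),
    Int.toNat_of_nonneg (by omega), neg_neg, neg_neg, sub_neg_eq_add, sub_neg_eq_add,
    add_comm (n : ℤ) x, add_comm (n : ℤ) y]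

lemma mem_LB2_of_isCocore {n : ℕ} {l : Bipartition} (hl : Bipartition.size l = 2 * n - 2)
    (h : IsCocore n (symbolOf l (sigmaT 1)) trivialSymbol) : l ∈ LB2 n := by
  obtain ⟨hn, hchain⟩ := isCocore_trivialSymbol_iff.mp h
  have hw : symbolWeight (symbolOf l (sigmaT 1)) = 2 * n := by
    have := two_mul_weight_Iic (-2)
    have := two_mul_weight_Iic 1
    simp only [symbolWeight, symbolOf, sigmaT_one, weight_range_betaSet]
    simp only [Bipartition.size] at hl
    omega
  obtain ⟨Λ₁, h₁, h₂⟩ := exists_cohookStep_cohookStep hn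
    ⟨isBetaSet_range_betaSet _ _, isBetaSet_range_betaSet _ _⟩ hw symbolWeight_trivialSymbol
    hchain
  obtain ⟨x, y, hxy, hx, hxn, hy, hyn, hΛ⟩ := eq_of_cohookStep_cohookStep_trivialSymbol
    (Set.mem_range_self 0) (Set.mem_range_self 1) (by simp [sigmaT_one, betaSet])
    (betaSet_strictAnti _ _ zero_lt_one) h₁ h₂
  rcases hxy.lt_or_gt with hlt | hlt
  · exact mem_LB2_of_symbolOf_eq hlt hy hxn (by rw [hΛ, Set.pair_comm, Set.insert_comm])
  · exact mem_LB2_of_symbolOf_eq hlt hx hyn hΛ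

lemma LB2_eq_image (n : ℕ) :
    LB2 n = (fun q : ℕ × ℕ => lb2Bip n q.1 q.2) ''
      ↑((Finset.range (n + 1) ×ˢ Finset.range (n + 1)).filter fun q => q.1 < q.2) := by
  ext l
  simp only [LB2, Set.mem_image, Finset.coe_filter, Finset.mem_product, Finset.mem_range,
    Set.mem_ofPred_eq, Prod.exists]
  constructor
  · rintro ⟨i, j, hij, hjn, rfl⟩
    exact ⟨i, j, ⟨⟨by omega, by omega⟩, hij⟩, rfl⟩
  · rintro ⟨i, j, ⟨⟨-, hj⟩, hij⟩, rfl⟩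
    exact ⟨i, j, hij, by omega, rfl⟩

lemma lb2Bip_injOn (n : ℕ) :
    Set.InjOn (fun q : ℕ × ℕ => lb2Bip n q.1 q.2)
      ↑((Finset.range (n + 1) ×ˢ Finset.range (n + 1)).filter fun q => q.1 < q.2) := by
  rintro ⟨i, j⟩ hq ⟨i', j'⟩ hq' h
  simp only [Finset.coe_filter, Finset.mem_product, Finset.mem_range, Set.mem_ofPred_eq]
    at hq hq'
  have hX := congrArg (fun l => (symbolOf l (sigmaT 1)).1) h
  simp only [symbolOf_lb2Bip hq.2 (by omega : j ≤ n), symbolOf_lb2Bip hq'.2 (by omega : j' ≤ n),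
    Set.ext_iff, Set.mem_sdiff, Set.mem_Iic, Set.mem_insert_iff, Set.mem_singleton_iff] at hX
  have := hX (-i); have := hX (-j); have := hX (-i'); have := hX (-j')
  simp only [Prod.mk.injEq]
  omega

theorem decomposition_numbers_stmt4_general (n : ℕ) :
    (∀ l : Bipartition, Bipartition.size l = 2 * n - 2 →
        (IsCocore n (symbolOf l (sigmaT 1)) trivialSymbol ↔ l ∈ LB2 n)) ∧
    {l : Bipartition | Bipartition.size l = 2 * n - 2 ∧
        IsCocore n (symbolOf l (sigmaT 1)) trivialSymbol}.Finite ∧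
    {l : Bipartition | Bipartition.size l = 2 * n - 2 ∧
        IsCocore n (symbolOf l (sigmaT 1)) trivialSymbol}.ncard = n * (n + 1) / 2 := by
  have hiff (l : Bipartition) (hl : Bipartition.size l = 2 * n - 2) :
      IsCocore n (symbolOf l (sigmaT 1)) trivialSymbol ↔ l ∈ LB2 n :=
    ⟨mem_LB2_of_isCocore hl, fun ⟨_, _, hij, hjn, hl⟩ =>
      hl ▸ isCocore_symbolOf_lb2Bip hij hjn⟩
  have hset : {l : Bipartition | Bipartition.size l = 2 * n - 2 ∧
      IsCocore n (symbolOf l (sigmaT 1)) trivialSymbol} = LB2 n := by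
    ext l
    refine ⟨fun ⟨hl, h⟩ => (hiff l hl).mp h, fun hl => ?_⟩
    obtain ⟨i, j, hij, hjn, rfl⟩ := hl
    exact ⟨size_lb2Bip hij hjn, isCocore_symbolOf_lb2Bip hij hjn⟩
  refine ⟨hiff, ?_, ?_⟩
  · rw [hset, LB2_eq_image]
    exact (Finset.finite_toSet _).image _
  · rw [hset, LB2_eq_image, (lb2Bip_injOn n).ncard_image, Set.ncard_coe_finset,
      Finset.card_product_filter_lt, Finset.card_range, Nat.choose_two_right,
      Nat.add_sub_cancel, mul_comm]

/-- The bipartitions of `2n - 2` whose symbol of charge `σ₁ = (-2,1)`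
has `n`-co-core the trivial symbol are exactly the members of `LB2 n`, and there are
exactly `n(n+1)/2` of them. -/
theorem decomposition_numbers_stmt4 (n : ℕ) (hn : 1 ≤ n) :
    (∀ l : Bipartition, Bipartition.size l = 2 * n - 2 →
        (IsCocore n (symbolOf l (sigmaT 1)) trivialSymbol ↔ l ∈ LB2 n)) ∧
    {l : Bipartition | Bipartition.size l = 2 * n - 2 ∧
        IsCocore n (symbolOf l (sigmaT 1)) trivialSymbol}.Finite ∧
    {l : Bipartition | Bipartition.size l = 2 * n - 2 ∧
        IsCocore n (symbolOf l (sigmaT 1)) trivialSymbol}.ncard = n * (n + 1) / 2 :=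
  decomposition_numbers_stmt4_general n
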